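/- arXiv:1702.05505 — 4 statements merged into one kernel-verified Lean document; each statement's English description precedes it below -/
import Mathlib

section
/- Let R be a Noetherian local ring, f ∈ m_R an element whose image f̄ in R_red := R/nil(R) is a nonzerodivisor, and suppose R/fR is reduced (i.e. nil(R/fR) = 0). Then R is reduced and f is a nonzerodivisor on R. -/
/-!
Every nilpotent `x` dies in the reduced ring `R/fR`, so `x = f y`; since `f` is a nonzerodivisor
modulo `nil(R)`, the cofactor `y` is again nilpotent. Hence `nil(R) = f • nil(R)`, and Nakayama's
lemma (with `f ∈ m_R`, `nil(R)` finitely generated) gives `nil(R) = 0`. Then `R = R_red`, on which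
`f` is a nonzerodivisor by assumption.
-/

section

variable {R : Type*} [CommRing R]

theorem nilradical_le_span_singleton_smul_nilradical {f : R}
    (hact : Ideal.Quotient.mk (nilradical R) f ∈ nonZeroDivisors (R ⧸ nilradical R))
    (hred : IsReduced (R ⧸ Ideal.span {f})) :
    nilradical R ≤ Ideal.span {f} • nilradical R := by
  intro x hx
  have hxf : x ∈ Ideal.span {f} := by
    rw [← Ideal.Quotient.eq_zero_iff_mem]
    exact ((mem_nilradical.mp hx).map _).eq_zero
  obtain ⟨y, rfl⟩ := Ideal.mem_span_singleton'.mp hxf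
  have hy : y ∈ nilradical R := by
    rw [← Ideal.Quotient.eq_zero_iff_mem, ← mul_right_mem_nonZeroDivisors_eq_zero_iff hact,
      ← map_mul, Ideal.Quotient.eq_zero_iff_mem]
    exact hx
  rw [mul_comm]
  exact Submodule.smul_mem_smul (Ideal.mem_span_singleton_self f) hy

theorem mem_nonZeroDivisors_of_mk_nilradical_mem [IsReduced R] {f : R}
    (hf : Ideal.Quotient.mk (nilradical R) f ∈ nonZeroDivisors (R ⧸ nilradical R)) :
    f ∈ nonZeroDivisors R := by
  refine mem_nonZeroDivisors_of_injective ?_ hf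
  rw [RingHom.injective_iff_ker_eq_bot, Ideal.mk_ker, nilradical_eq_bot_iff]
  infer_instance

end

/-- if `f` is in the maximal ideal of a Noetherian local ring `R`, the image
of `f` in `R_red = R/nil(R)` is a nonzerodivisor, and `R/fR` is reduced, then `R` is
reduced and `f` is a nonzerodivisor on `R`. -/
theorem reduced_of_active_and_reduced_fibre
    {R : Type*} [CommRing R] [IsNoetherianRing R] [IsLocalRing R]
    (f : R) (hf : f ∈ IsLocalRing.maximalIdeal R)
    (hact : Ideal.Quotient.mk (nilradical R) f ∈ nonZeroDivisors (R ⧸ nilradical R))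
    (hred : IsReduced (R ⧸ Ideal.span {f})) :
    IsReduced R ∧ f ∈ nonZeroDivisors R := by
  have hf_jac : Ideal.span {f} ≤ (⊥ : Ideal R).jacobson :=
    ((Ideal.span_singleton_le_iff_mem _).mpr hf).trans (IsLocalRing.maximalIdeal_le_jacobson ⊥)
  have hnil : nilradical R = ⊥ :=
    Submodule.eq_bot_of_le_smul_of_le_jacobson_bot _ _ (IsNoetherian.noetherian _)
      (nilradical_le_span_singleton_smul_nilradical hact hred) hf_jac
  have : IsReduced R := nilradical_eq_bot_iff.mp hnil
  exact ⟨this, mem_nonZeroDivisors_of_mk_nilradical_mem hact⟩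
end

section
/- Let R be the local ring at x of a reduced isolated non-normal singularity (X,x) of dimension ≥ 1, with normalization R̄ = (n_*O_{X̄})_x, a semilocal ring with r maximal ideals (one per irreducible component of (X,x)). Then the Jacobson radical J of R̄ is contained in R if and only if δ(X,x) := length_R(R̄/R) = r − 1, and in general δ(X,x) ≥ r − 1. -/
open IsLocalRing

/-- The length of a module, realized as the Krull dimension of its submodule lattice
(this agrees with the usual length of a module). -/
noncomputable def moduleLength (R M : Type*) [Ring R] [AddCommGroup M] [Module R M] :
    WithBot ℕ∞ :=
  Order.krullDim (Submodule R M)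

/-!
Write `J` for the Jacobson radical of `S` and `R'` for the image of `R` in `S`. By the Chinese
remainder theorem `S ⧸ J` is the product of the `r` residue fields of `S`, each of which is the
residue field `k` of `R`, and `R'` maps onto the diagonal copy of `k`. Hence `S ⧸ (R' + J)` has
length `r - 1`, and `δ = length ((R' + J) / R') + (r - 1)`, where `(R' + J) / R'` vanishes exactly
when `J ⊆ R'`.
-/

open Function

section QuotientLength

variable {R M P : Type*} [Ring R] [AddCommGroup M] [Module R M] [AddCommGroup P] [Module R P]

theorem Module.length_quotient_eq_add_of_surjective {φ : M →ₗ[R] P} (hφ : Surjective φ)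
    (N : Submodule R M) :
    Module.length R (M ⧸ N) =
      Module.length R ((LinearMap.ker φ).map N.mkQ) + Module.length R (P ⧸ N.map φ) := by
  set g := N.mapQ (N.map φ) φ (N.le_comap_map φ)
  have hg : Surjective g := by
    rw [← LinearMap.range_eq_top, Submodule.range_mapQ, LinearMap.range_eq_top.mpr hφ,
      Submodule.map_top, Submodule.range_mkQ]
  have hker : LinearMap.ker g = (LinearMap.ker φ).map N.mkQ := by
    rw [Submodule.ker_mapQ, Submodule.comap_map_eq, Submodule.map_sup, Submodule.mkQ_map_self,
      bot_sup_eq]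
  rw [Module.length_eq_add_of_exact _ g (LinearMap.ker g).injective_subtype hg
    (LinearMap.exact_subtype_ker_map g), hker]

theorem Submodule.map_mkQ_eq_bot_iff {N K : Submodule R M} : K.map N.mkQ = ⊥ ↔ K ≤ N := by
  rw [← LinearMap.le_ker_iff_map, Submodule.ker_mkQ]

end QuotientLength

section ResidueFields

variable {R : Type*} [CommRing R]

theorem Module.length_eq_one_of_surjective_algebraMap {K : Type*} [Field K] [Algebra R K]
    (h : Surjective (algebraMap R K)) : Module.length R K = 1 := by
  rw [Module.length_eq_of_surjective h, Module.length_eq_one]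

variable [IsLocalRing R]

theorem IsLocalRing.ker_algebraMap_eq_maximalIdeal {K : Type*} [Field K] [Algebra R K]
    (h : Surjective (algebraMap R K)) : RingHom.ker (algebraMap R K) = maximalIdeal R :=
  eq_maximalIdeal (RingHom.ker_isMaximal_of_surjective _ h)

variable {ι : Type*} [Nonempty ι] {K : ι → Type*} [∀ i, Field (K i)] [∀ i, Algebra R (K i)]

theorem IsLocalRing.ker_algebraMap_pi_eq_maximalIdeal (h : ∀ i, Surjective (algebraMap R (K i))) :
    RingHom.ker (algebraMap R (Π i, K i)) = maximalIdeal R := by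
  ext a
  simp only [RingHom.mem_ker, funext_iff, Pi.algebraMap_apply, Pi.zero_apply]
  simp only [← RingHom.mem_ker, ker_algebraMap_eq_maximalIdeal (h _), forall_const]

theorem Module.length_range_algebraMap_pi (h : ∀ i, Surjective (algebraMap R (K i))) :
    Module.length R (LinearMap.range (Algebra.linearMap R (Π i, K i))) = 1 := by
  have hker : LinearMap.ker (Algebra.linearMap R (Π i, K i)) = maximalIdeal R :=
    ker_algebraMap_pi_eq_maximalIdeal h
  rw [← (LinearMap.quotKerEquivRange _).length_eq, hker]
  exact length_eq_one_of_surjective_algebraMap (K := ResidueField R) Ideal.Quotient.mk_surjective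

theorem Module.length_pi_quotient_range_algebraMap [Fintype ι]
    (h : ∀ i, Surjective (algebraMap R (K i))) :
    Module.length R ((Π i, K i) ⧸ LinearMap.range (Algebra.linearMap R (Π i, K i))) =
      (Fintype.card ι - 1 : ℕ) := by
  have hexact := length_eq_add_of_exact _ _ (Submodule.injective_subtype _)
    (Submodule.mkQ_surjective _)
    (LinearMap.exact_subtype_mkQ (LinearMap.range (Algebra.linearMap R (Π i, K i))))
  simp only [length_pi_of_fintype, length_range_algebraMap_pi h,
    length_eq_one_of_surjective_algebraMap (h _), Finset.sum_const, Finset.card_univ,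
    nsmul_eq_mul, mul_one] at hexact
  obtain ⟨n, hn⟩ := Nat.exists_eq_succ_of_ne_zero (Fintype.card_ne_zero (α := ι))
  rw [hn, Nat.cast_succ, add_comm] at hexact
  rw [hn, Nat.succ_sub_one]
  exact (ENat.add_right_injective_of_ne_top ENat.one_ne_top hexact).symm

end ResidueFields

namespace MaximalSpectrum

variable (R S : Type*) [CommRing R] [CommRing S] [Algebra R S]

noncomputable def piQuotient : S →ₐ[R] Π v : MaximalSpectrum S, S ⧸ v.asIdeal :=
  AlgHom.pi fun v => Ideal.Quotient.mkₐ R v.asIdeal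

variable {R S}

theorem ker_piQuotient :
    LinearMap.ker (piQuotient R S).toLinearMap = (⊥ : Ideal S).jacobson.restrictScalars R := by
  ext s
  simp only [LinearMap.mem_ker, Submodule.restrictScalars_mem, Ideal.jacobson_bot,
    Ring.jacobson_eq_sInf_isMaximal, Ideal.mem_sInf, Set.mem_ofPred_eq, piQuotient,
    AlgHom.toLinearMap_apply, funext_iff, AlgHom.pi_apply, Ideal.Quotient.mkₐ_eq_mk,
    Pi.zero_apply, Ideal.Quotient.eq_zero_iff_mem]
  exact ⟨fun h I hI => h ⟨I, hI⟩, fun h v => h v.isMaximal⟩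

theorem piQuotient_surjective [Finite (MaximalSpectrum S)] : Surjective (piQuotient R S) := by
  intro x
  obtain ⟨s, hs⟩ := Ideal.pi_quotient_surjective (fun _ _ h => isCoprime_of_ne h) x
  exact ⟨s, funext hs⟩

end MaximalSpectrum

theorem length_quotient_range_algebraMap_eq {R S : Type*} [CommRing R] [IsLocalRing R]
    [CommRing S] [Algebra R S] [Finite (MaximalSpectrum S)] [Nonempty (MaximalSpectrum S)]
    (h : ∀ v : MaximalSpectrum S, Surjective (algebraMap R (S ⧸ v.asIdeal))) :
    Module.length R (S ⧸ LinearMap.range (Algebra.linearMap R S)) =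
      Module.length R (((⊥ : Ideal S).jacobson.restrictScalars R).map
        (LinearMap.range (Algebra.linearMap R S)).mkQ) +
      (Nat.card (MaximalSpectrum S) - 1 : ℕ) := by
  have := Fintype.ofFinite (MaximalSpectrum S)
  let := fun v : MaximalSpectrum S => Ideal.Quotient.field v.asIdeal
  have hdiag : (LinearMap.range (Algebra.linearMap R S)).map
      (MaximalSpectrum.piQuotient R S).toLinearMap =
      LinearMap.range (Algebra.linearMap R (Π v : MaximalSpectrum S, S ⧸ v.asIdeal)) := by
    rw [← LinearMap.range_comp]
    rfl
  rw [Module.length_quotient_eq_add_of_surjective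
      (φ := (MaximalSpectrum.piQuotient R S).toLinearMap)
      (MaximalSpectrum.piQuotient_surjective (R := R)),
    MaximalSpectrum.ker_piQuotient, hdiag, Module.length_pi_quotient_range_algebraMap h,
    Nat.card_eq_fintype_card]

theorem jacobson_radical_sub_iff_delta_eq_general
    {R S : Type*} [CommRing R] [IsLocalRing R] [CommRing S] [Algebra R S]
    (r : ℕ) (hr : 1 ≤ r)
    (hfin : {I : Ideal S | I.IsMaximal}.Finite)
    (hmax : {I : Ideal S | I.IsMaximal}.ncard = r)
    (hres : ∀ M : Ideal S, M.IsMaximal → ∀ s : S, ∃ a : R, s - algebraMap R S a ∈ M) :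
    ((r - 1 : ℕ) : WithBot ℕ∞) ≤
        moduleLength R (S ⧸ LinearMap.range (Algebra.linearMap R S)) ∧
    ((∀ s ∈ Ideal.jacobson (⊥ : Ideal S), s ∈ Set.range (algebraMap R S)) ↔
      moduleLength R (S ⧸ LinearMap.range (Algebra.linearMap R S)) =
        ((r - 1 : ℕ) : WithBot ℕ∞)) := by
  have hcard : Nat.card (MaximalSpectrum S) = r := by
    rw [Nat.card_congr (MaximalSpectrum.equivSubtype S), ← hmax, ← Nat.card_coe_set_eq]
    rfl
  have : Finite (MaximalSpectrum S) :=
    have : Finite {I : Ideal S // I.IsMaximal} := hfin.to_subtype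
    .of_equiv _ (MaximalSpectrum.equivSubtype S).symm
  have : Nonempty (MaximalSpectrum S) := (Nat.card_pos_iff.mp (hcard ▸ hr)).1
  have hsurj : ∀ v : MaximalSpectrum S, Surjective (algebraMap R (S ⧸ v.asIdeal)) := by
    intro v x
    obtain ⟨s, rfl⟩ := Ideal.Quotient.mk_surjective x
    obtain ⟨a, ha⟩ := hres v.asIdeal v.isMaximal s
    exact ⟨a, (Ideal.Quotient.eq.mpr ha).symm⟩
  have hJ : (∀ s ∈ Ideal.jacobson (⊥ : Ideal S), s ∈ Set.range (algebraMap R S)) ↔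
      (⊥ : Ideal S).jacobson.restrictScalars R ≤ LinearMap.range (Algebra.linearMap R S) :=
    Iff.rfl
  rw [moduleLength, ← Module.coe_length, length_quotient_range_algebraMap_eq hsurj, hcard, hJ,
    ← Submodule.map_mkQ_eq_bot_iff, ← Submodule.subsingleton_iff_eq_bot,
    ← Module.length_eq_zero_iff (R := R)]
  constructor
  · exact WithBot.coe_le_coe.mpr le_add_self
  · rw [← WithBot.coe_natCast, WithBot.coe_inj]
    exact ((ENat.add_left_injective_of_ne_top (ENat.natCast_ne_top _)).eq_iff' (zero_add _)).symm

/-- let `R` be the local ring of a reduced INNS with (semilocal)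
normalization `S = R̄`, module-finite over `R`, having `r` maximal ideals, such that all
residue fields of `S` agree with that of `R` (the components are normal germs with
residue field the same as `R`'s). Then always `δ := length_R(S/R) ≥ r − 1`, and the
Jacobson radical `J` of `S` is contained in `R` iff `δ = r − 1`. -/
theorem jacobson_radical_sub_iff_delta_eq
    {R S : Type*} [CommRing R] [IsNoetherianRing R] [IsLocalRing R] [CommRing S]
    [Algebra R S] (hinj : Function.Injective (algebraMap R S)) [Module.Finite R S]
    (r : ℕ) (hr : 1 ≤ r)
    (hfin : {I : Ideal S | I.IsMaximal}.Finite)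
    (hmax : {I : Ideal S | I.IsMaximal}.ncard = r)
    (hres : ∀ M : Ideal S, M.IsMaximal → ∀ s : S, ∃ a : R, s - algebraMap R S a ∈ M)
    (hcomap : ∀ M : Ideal S, M.IsMaximal →
      Ideal.comap (algebraMap R S) M = maximalIdeal R) :
    ((r - 1 : ℕ) : WithBot ℕ∞) ≤
        moduleLength R (S ⧸ LinearMap.range (Algebra.linearMap R S)) ∧
    ((∀ s ∈ Ideal.jacobson (⊥ : Ideal S), s ∈ Set.range (algebraMap R S)) ↔
      moduleLength R (S ⧸ LinearMap.range (Algebra.linearMap R S)) =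
        ((r - 1 : ℕ) : WithBot ℕ∞)) :=
  jacobson_radical_sub_iff_delta_eq_general r hr hfin hmax hres
end

section
/- Let O = ℂ{x,y,z} (or the localization of ℂ[x,y,z] at the origin, or k[x,y,z] localized with k a field), I₁ = (z, x²−y⁴), I₂ = (x,y), Q = (z, x³, y⁵), and I = I₁ ∩ I₂ ∩ Q. Then: (a) dim_ℂ O/Q = 15; (b) dim_ℂ O/(I₁∩I₂ + Q) = 9; (c) dim_ℂ O/(I₁+I₂) = 1; so ε = 15 − 9 = 6 and δ(X^{>0}) = 2 + 0 + 1 = 3, hence δ(X,0) = 3 − 6 = −3. -/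
set_option synthInstance.maxHeartbeats 1000000
set_option maxHeartbeats 1000000

/-- The local ring `ℂ{x,y,z}` (we use the formal model `ℂ[[x,y,z]]`). -/
abbrev COxyz : Type := MvPowerSeries (Fin 3) ℂ

/-- `I₁ = (z, x² − y⁴)`, defining the `A₃`-singularity in the `(x,y)`-plane. -/
noncomputable def I1 : Ideal COxyz :=
  Ideal.span {MvPowerSeries.X 2, (MvPowerSeries.X 0) ^ 2 - (MvPowerSeries.X 1) ^ 4}

/-- `I₂ = (x, y)`, defining the `z`-axis. -/
noncomputable def I2 : Ideal COxyz :=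
  Ideal.span {MvPowerSeries.X 0, MvPowerSeries.X 1}

/-- `Q = (z, x³, y⁵)`, defining the embedded component. -/
noncomputable def Qemb : Ideal COxyz :=
  Ideal.span {MvPowerSeries.X 2, (MvPowerSeries.X 0) ^ 3, (MvPowerSeries.X 1) ^ 5}

/-!
`Q` and the auxiliary ideal `(z, x³, x²y, xy⁴, y⁵)` are monomial ideals, so the colength of
each is the number of monomials outside it: 15 and 10. The ideal `(I₁ ∩ I₂) + Q` is obtained
from the latter by adjoining `x² − y⁴`, which `x`, `y`, `z` multiply back into it; hence adjoining
it only adds the line `ℂ · (x² − y⁴)`, and the colength drops to 9. Finally `I₁ + I₂` is the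
maximal ideal, of colength 1.
-/

open Finsupp

theorem Ideal.finrank_quotient_eq_of_surjective {K A V : Type*} [Field K] [CommRing A]
    [Algebra K A] [AddCommGroup V] [Module K V] {J : Ideal A} (φ : A →ₗ[K] V)
    (hφ : Function.Surjective φ) (hker : ∀ f, φ f = 0 ↔ f ∈ J) :
    Module.finrank K (A ⧸ J) = Module.finrank K V := by
  have hJ : LinearMap.ker φ = J.restrictScalars K := by
    ext f; exact hker f
  exact ((Submodule.Quotient.restrictScalarsEquiv K J).symm ≪≫ₗ
    Submodule.quotEquivOfEq _ _ hJ.symm ≪≫ₗ φ.quotKerEquivOfSurjective hφ).finrank_eq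

namespace MvPowerSeries

variable {σ R : Type*} [CommRing R]

theorem exists_le_of_mem_span_monomial_image {S : Set (σ →₀ ℕ)} {f : MvPowerSeries σ R}
    (hf : f ∈ Ideal.span ((fun s => monomial s (1 : R)) '' S)) {n : σ →₀ ℕ}
    (hn : coeff n f ≠ 0) : ∃ s ∈ S, s ≤ n := by
  classical
  induction hf using Submodule.span_induction generalizing n with
  | mem g hg =>
    obtain ⟨s, hs, rfl⟩ := hg
    rw [coeff_monomial] at hn
    exact ⟨s, hs, (ite_ne_right_iff.mp hn).1.ge⟩
  | zero => simp at hn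
  | add g h _ _ hg hh =>
    rw [map_add] at hn
    by_cases h0 : coeff n g = 0
    · exact hh (by simpa [h0] using hn)
    · exact hg h0
  | smul r g _ hg =>
    rw [smul_eq_mul, coeff_mul] at hn
    obtain ⟨⟨p, q⟩, hpq, hne⟩ := Finset.exists_ne_zero_of_sum_ne_zero hn
    obtain ⟨s, hs, hsq⟩ := hg (right_ne_zero_of_mul hne)
    have hqn : q ≤ n := le_of_add_le_right (Finset.HasAntidiagonal.mem_antidiagonal.mp hpq).le
    exact ⟨s, hs, hsq.trans hqn⟩

theorem mem_span_monomial_image_of_exists_le {S : Set (σ →₀ ℕ)} (hS : S.Finite)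
    {f : MvPowerSeries σ R} (hf : ∀ n, coeff n f ≠ 0 → ∃ s ∈ S, s ≤ n) :
    f ∈ Ideal.span ((fun s => monomial s (1 : R)) '' S) := by
  induction S, hS using Set.Finite.induction_on generalizing f with
  | empty =>
    rw [show f = 0 from ext fun n => by_contra fun hn => by simpa using hf n hn]
    exact zero_mem _
  | @insert s S _ _ ih =>
    -- split off the part of `f` divisible by `X^s`
    let q : MvPowerSeries σ R := fun n => coeff (n + s) f
    have hq : ∀ n, coeff n q = coeff (n + s) f := fun _ => rfl
    have hrest : f - monomial s 1 * q ∈ Ideal.span ((fun s => monomial s (1 : R)) '' S) := by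
      refine ih fun n hn => ?_
      rw [map_sub, coeff_monomial_mul] at hn
      by_cases hsn : s ≤ n
      · simp [hsn, hq, tsub_add_cancel_of_le hsn] at hn
      · obtain ⟨t, ht, htn⟩ := hf n (by simpa [hsn] using hn)
        exact ⟨t, ht.resolve_left (by rintro rfl; exact hsn htn), htn⟩
    rw [← sub_add_cancel f (monomial s 1 * q), Set.image_insert_eq, Ideal.span_insert]
    exact add_mem (Ideal.mem_sup_right hrest)
      (Ideal.mem_sup_left (Ideal.mul_mem_right _ _ (Ideal.mem_span_singleton_self _)))

theorem mem_span_monomial_image_iff {S : Set (σ →₀ ℕ)} (hS : S.Finite) {f : MvPowerSeries σ R} :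
    f ∈ Ideal.span ((fun s => monomial s (1 : R)) '' S) ↔
      ∀ n, coeff n f ≠ 0 → ∃ s ∈ S, s ≤ n :=
  ⟨fun hf _ => exists_le_of_mem_span_monomial_image hf, mem_span_monomial_image_of_exists_le hS⟩

theorem mem_span_range_X_iff [Finite σ] {f : MvPowerSeries σ R} :
    f ∈ Ideal.span (Set.range X) ↔ constantCoeff f = 0 := by
  have hX : Set.range (X : σ → MvPowerSeries σ R) =
      (fun s => monomial s (1 : R)) '' Set.range (single · 1) := by
    rw [← Set.range_comp]; rfl
  rw [hX, mem_span_monomial_image_iff (Set.finite_range _), ← coeff_zero_eq_constantCoeff_apply]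
  constructor
  · intro h
    by_contra h0
    obtain ⟨_, ⟨i, rfl⟩, hi⟩ := h 0 h0
    simpa using single_le_iff.mp hi
  · intro h n hn
    obtain ⟨i, hi⟩ := Finsupp.ne_iff.mp (show n ≠ 0 by rintro rfl; exact hn h)
    exact ⟨_, ⟨i, rfl⟩, single_le_iff.mpr (Nat.one_le_iff_ne_zero.mpr hi)⟩

variable {K : Type*} [Field K]

theorem finrank_quotient_span_monomial_image {S : Set (σ →₀ ℕ)} (hS : S.Finite)
    (T : Finset (σ →₀ ℕ)) (hT : ∀ n, n ∈ T ↔ ∀ s ∈ S, ¬ s ≤ n) :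
    Module.finrank K (MvPowerSeries σ K ⧸ Ideal.span ((fun s => monomial s (1 : K)) '' S)) =
      T.card := by
  classical
  let φ : MvPowerSeries σ K →ₗ[K] (T → K) := LinearMap.pi fun t => coeff t.1
  have hφ : Function.Surjective φ := fun v =>
    ⟨fun n => if h : n ∈ T then v ⟨n, h⟩ else 0, funext fun t => dif_pos t.2⟩
  rw [Ideal.finrank_quotient_eq_of_surjective φ hφ, Module.finrank_fintype_fun_eq_card,
    Fintype.card_coe]
  intro f
  rw [mem_span_monomial_image_iff hS, funext_iff]
  simp only [φ, LinearMap.pi_apply, Pi.zero_apply, Subtype.forall, hT]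
  refine forall_congr' fun n => ?_
  constructor
  · intro h hn; by_contra! hS'; exact hn (h hS')
  · intro h hS'; by_contra hn; obtain ⟨s, hs, hsn⟩ := h hn; exact hS' s hs hsn

theorem finrank_quotient_span_range_X [Finite σ] :
    Module.finrank K (MvPowerSeries σ K ⧸ Ideal.span (Set.range (X : σ → MvPowerSeries σ K))) =
      1 := by
  refine (Ideal.finrank_quotient_eq_of_surjective (coeff (0 : σ →₀ ℕ))
    (fun c => ⟨C c, coeff_zero_C c⟩)
    fun f => ?_).trans (Module.finrank_self K)
  rw [mem_span_range_X_iff, coeff_zero_eq_constantCoeff_apply]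

theorem finrank_quotient_sup_span_singleton [Finite σ] {J : Ideal (MvPowerSeries σ K)}
    [FiniteDimensional K (MvPowerSeries σ K ⧸ J)] {g : MvPowerSeries σ K}
    (hXg : ∀ i, X i * g ∈ J) (hg : g ∉ J) :
    Module.finrank K (MvPowerSeries σ K ⧸ (J ⊔ Ideal.span {g})) + 1 =
      Module.finrank K (MvPowerSeries σ K ⧸ J) := by
  let W : Submodule K (MvPowerSeries σ K ⧸ J) := K ∙ Ideal.Quotient.mkₐ K J g
  have hW : Module.finrank K W = 1 := finrank_span_singleton <| by
    rwa [ne_eq, Ideal.Quotient.mkₐ_eq_mk, Ideal.Quotient.eq_zero_iff_mem]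
  have hmaxg : Ideal.span (Set.range X) ≤ J.colon {g} := by
    rw [Ideal.span_le]
    rintro _ ⟨i, rfl⟩
    exact Submodule.mem_colon_singleton.mpr (hXg i)
  let ψ := W.mkQ ∘ₗ (Ideal.Quotient.mkₐ K J).toLinearMap
  have hψ : Function.Surjective ψ :=
    W.mkQ_surjective.comp (Ideal.Quotient.mkₐ_surjective K J)
  rw [Ideal.finrank_quotient_eq_of_surjective ψ hψ, ← hW, W.finrank_quotient_add_finrank]
  intro f
  simp only [ψ, LinearMap.comp_apply, Submodule.mkQ_apply, Submodule.Quotient.mk_eq_zero,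
    W, Submodule.mem_span_singleton, AlgHom.toLinearMap_apply]
  constructor
  · rintro ⟨c, hc⟩
    refine Submodule.mem_sup.mpr ⟨f - c • g, ?_, c • g, ?_, sub_add_cancel f _⟩
    · rw [← Ideal.Quotient.eq_zero_iff_mem, ← Ideal.Quotient.mkₐ_eq_mk K, map_sub, ← hc,
        map_smul, sub_self]
    · exact Submodule.smul_of_tower_mem _ c (Ideal.mem_span_singleton_self g)
  · intro hf
    obtain ⟨a, ha, _, hb, rfl⟩ := Submodule.mem_sup.mp hf
    obtain ⟨r, rfl⟩ := Ideal.mem_span_singleton'.mp hb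
    -- `r ≡ r(0)` modulo the maximal ideal, which kills `g` modulo `J`
    have hr : (r - C (constantCoeff r)) * g ∈ J :=
      Submodule.mem_colon_singleton.mp (hmaxg (mem_span_range_X_iff.mpr (by simp)))
    refine ⟨constantCoeff r, ?_⟩
    rw [eq_comm, ← sub_eq_zero, ← map_smul, ← map_sub, Ideal.Quotient.mkₐ_eq_mk,
      Ideal.Quotient.eq_zero_iff_mem]
    convert J.add_mem ha hr using 1
    rw [smul_eq_C_mul]
    ring

end MvPowerSeries

open MvPowerSeries

noncomputable def xyExp (i j : ℕ) : Fin 3 →₀ ℕ := single 0 i + single 1 j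

lemma monomial_xyExp (i j : ℕ) : (monomial (xyExp i j) 1 : COxyz) = X 0 ^ i * X 1 ^ j := by
  rw [X_pow_eq, X_pow_eq, monomial_mul_monomial, one_mul, xyExp]

lemma xyExp_apply (i j : ℕ) (k : Fin 3) : xyExp i j k = ![i, j, 0] k := by
  fin_cases k <;> simp [xyExp]

lemma xyExp_le_iff {i j : ℕ} {n : Fin 3 →₀ ℕ} : xyExp i j ≤ n ↔ i ≤ n 0 ∧ j ≤ n 1 := by
  simp [Finsupp.le_def, Fin.forall_fin_succ, xyExp_apply]

lemma xyExp_injective : Function.Injective fun p : ℕ × ℕ => xyExp p.1 p.2 := by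
  intro p q h
  have h0 := DFunLike.congr_fun h 0
  have h1 := DFunLike.congr_fun h 1
  simp only [xyExp_apply] at h0 h1
  exact Prod.ext h0 h1

lemma mem_image_xyExp {F : Finset (ℕ × ℕ)} {n : Fin 3 →₀ ℕ} :
    n ∈ F.image (fun p => xyExp p.1 p.2) ↔ n 2 = 0 ∧ (n 0, n 1) ∈ F := by
  rw [Finset.mem_image]
  constructor
  · rintro ⟨p, hp, rfl⟩
    simpa [xyExp_apply] using hp
  · rintro ⟨h2, hF⟩
    refine ⟨_, hF, ?_⟩
    ext k; fin_cases k <;> simp [xyExp_apply, h2]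

lemma Qemb_eq_span_monomial :
    Qemb = Ideal.span ((fun s => monomial s (1 : ℂ)) '' {single 2 1, xyExp 3 0, xyExp 0 5}) := by
  simp only [Qemb, Set.image_insert_eq, Set.image_singleton, monomial_xyExp, ← X_def, pow_zero,
    mul_one, one_mul]

lemma finrank_quotient_Qemb : Module.finrank ℂ (COxyz ⧸ Qemb) = 15 := by
  rw [Qemb_eq_span_monomial, finrank_quotient_span_monomial_image (Set.toFinite _)
    ((Finset.range 3 ×ˢ Finset.range 5).image fun p => xyExp p.1 p.2),
    Finset.card_image_of_injective _ xyExp_injective]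
  · rfl
  · intro n
    simp only [mem_image_xyExp, Set.mem_insert_iff, Set.mem_singleton_iff, forall_eq_or_imp,
      forall_eq, single_le_iff, xyExp_le_iff, Finset.mem_product, Finset.mem_range]
    omega

noncomputable def monomialPart : Ideal COxyz :=
  Ideal.span ((fun s => monomial s (1 : ℂ)) ''
    {single 2 1, xyExp 3 0, xyExp 2 1, xyExp 1 4, xyExp 0 5})

lemma finrank_quotient_monomialPart : Module.finrank ℂ (COxyz ⧸ monomialPart) = 10 := by
  rw [monomialPart, finrank_quotient_span_monomial_image (Set.toFinite _)
    (((Finset.range 3 ×ˢ Finset.range 5).filter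
      fun p => ¬(2 ≤ p.1 ∧ 1 ≤ p.2) ∧ ¬(1 ≤ p.1 ∧ 4 ≤ p.2)).image fun p => xyExp p.1 p.2),
    Finset.card_image_of_injective _ xyExp_injective]
  · rfl
  · intro n
    simp only [mem_image_xyExp, Set.mem_insert_iff, Set.mem_singleton_iff, forall_eq_or_imp,
      forall_eq, single_le_iff, xyExp_le_iff, Finset.mem_filter, Finset.mem_product,
      Finset.mem_range]
    omega

lemma xy_mem_monomialPart {i j : ℕ}
    (h : xyExp i j ∈ ({single 2 1, xyExp 3 0, xyExp 2 1, xyExp 1 4, xyExp 0 5} : Set _)) :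
    (X 0 ^ i * X 1 ^ j : COxyz) ∈ monomialPart :=
  monomial_xyExp i j ▸ Ideal.subset_span ⟨_, h, rfl⟩

lemma X_mul_mem_monomialPart (k : Fin 3) :
    X k * (X 0 ^ 2 - X 1 ^ 4) ∈ monomialPart := by
  fin_cases k
  · show X 0 * _ ∈ _
    have h := sub_mem (xy_mem_monomialPart (i := 3) (j := 0) (by simp))
      (xy_mem_monomialPart (i := 1) (j := 4) (by simp))
    convert h using 1; ring
  · show X 1 * _ ∈ _
    have h := sub_mem (xy_mem_monomialPart (i := 2) (j := 1) (by simp))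
      (xy_mem_monomialPart (i := 0) (j := 5) (by simp))
    convert h using 1; ring
  · exact Ideal.mul_mem_right _ _ (X_def (R := ℂ) (2 : Fin 3) ▸ Ideal.subset_span ⟨_, by simp, rfl⟩)

lemma not_mem_monomialPart : (X 0 ^ 2 - X 1 ^ 4 : COxyz) ∉ monomialPart := by
  rw [monomialPart, mem_span_monomial_image_iff (Set.toFinite _)]
  intro h
  obtain ⟨s, hs, hle⟩ := h (single 0 2) (by simp [coeff_X_pow, single_eq_single_iff])
  simp only [Set.mem_insert_iff, Set.mem_singleton_iff] at hs
  rcases hs with rfl | rfl | rfl | rfl | rfl <;>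
    simp [single_le_iff, xyExp_le_iff] at hle

lemma sq_sub_pow_four_mem_I2 : (X 0 ^ 2 - X 1 ^ 4 : COxyz) ∈ I2 :=
  Ideal.mem_span_pair.mpr ⟨X 0, -X 1 ^ 3, by ring⟩

lemma I1_sup_I2_eq : I1 ⊔ I2 = Ideal.span (Set.range X) := by
  have hX : ∀ k, (X k : COxyz) ∈ Ideal.span (Set.range X) := fun k => Ideal.subset_span ⟨k, rfl⟩
  apply le_antisymm
  · refine sup_le (Ideal.span_le.mpr ?_) (Ideal.span_le.mpr ?_) <;>
      simp only [Set.insert_subset_iff, Set.singleton_subset_iff, SetLike.mem_coe]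
    · refine ⟨hX 2, ?_⟩
      convert sub_mem ((Ideal.span _).mul_mem_left (X 0) (hX 0))
        ((Ideal.span _).mul_mem_left (X 1 ^ 3) (hX 1)) using 1
      ring
    · exact ⟨hX 0, hX 1⟩
  · rw [Ideal.span_le]
    rintro _ ⟨k, rfl⟩
    fin_cases k
    · exact Ideal.mem_sup_right (Ideal.subset_span (by simp))
    · exact Ideal.mem_sup_right (Ideal.subset_span (by simp))
    · exact Ideal.mem_sup_left (Ideal.subset_span (by simp))

lemma I1_inf_I2_sup_Qemb_eq :
    I1 ⊓ I2 ⊔ Qemb = monomialPart ⊔ Ideal.span {X 0 ^ 2 - X 1 ^ 4} := by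
  have hz : (X 2 : COxyz) ∈ monomialPart :=
    X_def (R := ℂ) (2 : Fin 3) ▸ Ideal.subset_span ⟨_, by simp, rfl⟩
  apply le_antisymm
  · refine sup_le (inf_le_left.trans (Ideal.span_le.mpr ?_)) ?_
    · simp only [Set.insert_subset_iff, Set.singleton_subset_iff, SetLike.mem_coe]
      exact ⟨Ideal.mem_sup_left hz, Ideal.mem_sup_right (Ideal.mem_span_singleton_self _)⟩
    · refine le_sup_of_le_left (Qemb_eq_span_monomial ▸ Ideal.span_mono (Set.image_mono ?_))
      simp [Set.insert_subset_iff]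
  · have hg : (X 0 ^ 2 - X 1 ^ 4 : COxyz) ∈ I1 ⊓ I2 ⊔ Qemb :=
      Ideal.mem_sup_left ⟨Ideal.subset_span (by simp), sq_sub_pow_four_mem_I2⟩
    have hQ : ∀ s ∈ ({single 2 1, xyExp 3 0, xyExp 0 5} : Set _),
        (monomial s (1 : ℂ) : COxyz) ∈ I1 ⊓ I2 ⊔ Qemb := fun s hs =>
      Ideal.mem_sup_right (Qemb_eq_span_monomial ▸ Ideal.subset_span ⟨s, hs, rfl⟩)
    refine sup_le (Ideal.span_le.mpr ?_) (Ideal.span_le.mpr (by simpa using hg))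
    rintro _ ⟨s, hs, rfl⟩
    simp only [Set.mem_insert_iff, Set.mem_singleton_iff] at hs
    rcases hs with rfl | rfl | rfl | rfl | rfl
    · exact hQ _ (by simp)
    · exact hQ _ (by simp)
    · have := add_mem (Ideal.mul_mem_left _ (X 1) hg) (hQ (xyExp 0 5) (by simp))
      change (monomial (xyExp _ _) 1 : COxyz) ∈ I1 ⊓ I2 ⊔ Qemb
      rw [monomial_xyExp] at this ⊢
      convert this using 1; ring
    · have := sub_mem (hQ (xyExp 3 0) (by simp)) (Ideal.mul_mem_left _ (X 0) hg)
      change (monomial (xyExp _ _) 1 : COxyz) ∈ I1 ⊓ I2 ⊔ Qemb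
      rw [monomial_xyExp] at this ⊢
      convert this using 1; ring
    · exact hQ _ (by simp)

/-- Example 5.6: with `O = ℂ{x,y,z}`, `I₁ = (z, x²−y⁴)`, `I₂ = (x,y)`,
`Q = (z,x³,y⁵)` and `I = I₁ ∩ I₂ ∩ Q`:
(a) `dim_ℂ O/Q = 15`; (b) `dim_ℂ O/(I₁∩I₂ + Q) = 9`; (c) `dim_ℂ O/(I₁+I₂) = 1`;
so `ε = 15 − 9 = 6` and `δ(X^{>0}) = 2 + 0 + 1 = 3`, hence `δ(X,0) = 3 − 6 = −3`. -/
theorem example_5_6 :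
    Module.finrank ℂ (COxyz ⧸ Qemb) = 15 ∧
    Module.finrank ℂ (COxyz ⧸ ((I1 ⊓ I2) ⊔ Qemb)) = 9 ∧
    Module.finrank ℂ (COxyz ⧸ (I1 ⊔ I2)) = 1 ∧
    (15 - 9 : ℤ) = 6 ∧ (2 + 0 + 1 : ℤ) = 3 ∧ (3 : ℤ) - 6 = -3 := by
  have : FiniteDimensional ℂ (COxyz ⧸ monomialPart) :=
    Module.finite_of_finrank_pos (by rw [finrank_quotient_monomialPart]; norm_num)
  have hb := finrank_quotient_sup_span_singleton X_mul_mem_monomialPart not_mem_monomialPart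
  rw [finrank_quotient_monomialPart] at hb
  refine ⟨finrank_quotient_Qemb, ?_, ?_, by norm_num, by norm_num, by norm_num⟩
  · rw [I1_inf_I2_sup_Qemb_eq]; exact Nat.succ_injective hb
  · rw [I1_sup_I2_eq, finrank_quotient_span_range_X]
end

section
/- Let A be a local ring, and let I, I₁, I₂ be ideals of a Noetherian local A-algebra O with I = I₁ ∩ I₂, and let f ∈ O be such that multiplication by f is injective on O/I and on O/I₁ ⊕ O/I₂ (via the natural diagonal/difference exact sequence 0 → O/I → O/I₁ ⊕ O/I₂ → O/(I₁+I₂) → 0). If moreover O/(I + fO) is reduced and the radicals satisfy √(I + fO) = √((I₁+fO) ∩ (I₂+fO)), then (I₁+fO) ∩ (I₂+fO) = I + fO, i.e. the kernel of multiplication by f on O/(I₁+I₂) vanishes. -/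
/-- let `I = I₁ ∩ I₂` be ideals of a Noetherian local algebra `O` over a
local ring `A`, and `f ∈ O` such that multiplication by `f` is injective on `O/I` and on
`O/I₁ ⊕ O/I₂`. If `O/(I + fO)` is reduced and
`√(I + fO) = √((I₁ + fO) ∩ (I₂ + fO))`, then `(I₁ + fO) ∩ (I₂ + fO) = I + fO`, i.e. the
kernel of multiplication by `f` on `O/(I₁ + I₂)` vanishes. -/
theorem snake_kernel_vanishes
    {A : Type*} [CommRing A] [IsLocalRing A]
    {O : Type*} [CommRing O] [IsNoetherianRing O] [IsLocalRing O] [Algebra A O]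
    (I I₁ I₂ : Ideal O) (hI : I = I₁ ⊓ I₂) (f : O)
    (hinjI : Function.Injective (fun x : O ⧸ I => Ideal.Quotient.mk I f * x))
    (hinj₁ : Function.Injective (fun x : O ⧸ I₁ => Ideal.Quotient.mk I₁ f * x))
    (hinj₂ : Function.Injective (fun x : O ⧸ I₂ => Ideal.Quotient.mk I₂ f * x))
    (hred : IsReduced (O ⧸ (I ⊔ Ideal.span {f})))
    (hrad : (I ⊔ Ideal.span {f}).radical =
      ((I₁ ⊔ Ideal.span {f}) ⊓ (I₂ ⊔ Ideal.span {f})).radical) :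
    (I₁ ⊔ Ideal.span {f}) ⊓ (I₂ ⊔ Ideal.span {f}) = I ⊔ Ideal.span {f} := by
  have hrad' : (I ⊔ Ideal.span {f}).radical = I ⊔ Ideal.span {f} :=
    ((Ideal.isRadical_iff_quotient_reduced _).mpr hred).radical
  apply le_antisymm
  · calc (I₁ ⊔ Ideal.span {f}) ⊓ (I₂ ⊔ Ideal.span {f})
        ≤ ((I₁ ⊔ Ideal.span {f}) ⊓ (I₂ ⊔ Ideal.span {f})).radical := Ideal.le_radical
      _ = (I ⊔ Ideal.span {f}).radical := hrad.symm
      _ = I ⊔ Ideal.span {f} := hrad'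
  · exact le_inf (sup_le_sup_right (hI ▸ inf_le_left) _)
      (sup_le_sup_right (hI ▸ inf_le_right) _)
end
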